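/- arXiv:1708.08302 — 2 statements merged into one kernel-verified Lean document; each statement's English description precedes it below -/
import Mathlib

section
/- Let x̄ ∈ X ∩ F_b with Φ(x̄) ∈ ℝ. Then x̄ is an optimal solution of (P) if and only if ∫_T φ'(x̄(t))·u(t) dμ(t) ≥ 0 for every u ∈ K_{x̄} := [ℝ₊·(dom Φ - x̄)] ∩ X̃⁰, where X̃⁰ = {u ∈ X̃ : ∫ u ψ_k dμ = 0 ∀k}. -/
open MeasureTheory ENNReal Filter Set Topology

/-- Positive part of an extended real, in `ℝ≥0∞`. -/
noncomputable def epos (a : EReal) : ℝ≥0∞ := if a = ⊤ then ⊤ else ENNReal.ofReal a.toReal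

/-- Extended integral `∫ f dμ := ∫ f₊ dμ - ∫ f₋ dμ` with the convention `∞ - ∞ := ∞`. -/
noncomputable def eintegral {T : Type*} [MeasurableSpace T] (μ : Measure T) (f : T → EReal) :
    EReal :=
  if (∫⁻ t, epos (f t) ∂μ) = ⊤ then ⊤
  else ((∫⁻ t, epos (f t) ∂μ : ℝ≥0∞) : EReal) - ((∫⁻ t, epos (- f t) ∂μ : ℝ≥0∞) : EReal)


/-- The integral functional Phi(x) := extended integral of phi(x(.)) with respect to mu. -/
noncomputable def Phi {T : Type*} [MeasurableSpace T] (μ : Measure T) (φ : ℝ → EReal)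
    (x : T → ℝ) : EReal := eintegral μ (fun t => φ (x t))

/-- The feasible set of the entropy minimization problem: measurable `x` with `x·ψ_k ∈ L¹` and
`∫ x ψ_k dμ = b_k` for each `k`. -/
def Feas {T : Type*} [MeasurableSpace T] (μ : Measure T) {m : ℕ} (ψ : Fin m → T → ℝ)
    (b : Fin m → ℝ) : Set (T → ℝ) :=
  {x : T → ℝ | Measurable x ∧ (∀ k, Integrable (fun t => x t * ψ k t) μ) ∧
    ∀ k, (∫ t, x t * ψ k t ∂μ) = b k}

/-! Both directions compare `Φ` along the segment from `x̄` to a competitor `x`. By convexity the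
difference quotients `(φ(x̄ + s(x - x̄)) - φ(x̄)) / s` are nondecreasing in `s ∈ (0, 1]`. At `s = 1`
they dominate `φ'(x̄)(x - x̄)`, which gives sufficiency of the integral condition. Conversely,
optimality makes their integrals nonnegative, since the segment stays feasible; as `s ↓ 0` they
decrease to `φ'(x̄)(x - x̄)`, and monotone convergence, applied separately to positive and negative
parts, carries the nonnegativity to the limit. -/
theorem EReal.toReal_eq_toENNReal_sub (x : EReal) :
    x.toReal = x.toENNReal.toReal - (-x).toENNReal.toReal := by
  induction x with
  | bot => simp
  | top => simp
  | coe a =>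
    rw [← EReal.coe_neg, EReal.real_coe_toENNReal, EReal.real_coe_toENNReal,
      ENNReal.toReal_ofReal', ENNReal.toReal_ofReal', EReal.toReal_coe,
      max_zero_sub_max_neg_zero_eq_self]

theorem EReal.toENNReal_le_toENNReal_add_ofReal_neg (x : ℝ) (y : EReal) :
    y.toENNReal ≤ ((x : EReal) + y).toENNReal + ENNReal.ofReal (-x) := by
  induction y with
  | bot => simp
  | top => simp
  | coe y =>
    simpa [← EReal.coe_add] using ENNReal.ofReal_add_le (p := x + y) (q := -x)

section eintegral

variable {T : Type*} [MeasurableSpace T] {μ : Measure T}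

-- `epos` is `EReal.toENNReal`, whose Mathlib API is used from here on.
theorem eintegral_def (f : T → EReal) :
    eintegral μ f = if ∫⁻ t, (f t).toENNReal ∂μ = ⊤ then ⊤
      else ((∫⁻ t, (f t).toENNReal ∂μ : ℝ≥0∞) : EReal)
        - ((∫⁻ t, (-f t).toENNReal ∂μ : ℝ≥0∞) : EReal) :=
  rfl

theorem eintegral_congr_ae {f g : T → EReal} (h : f =ᵐ[μ] g) : eintegral μ f = eintegral μ g := by
  have hpos : ∫⁻ t, (f t).toENNReal ∂μ = ∫⁻ t, (g t).toENNReal ∂μ :=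
    lintegral_congr_ae (h.mono fun t ht => by simp only [ht])
  have hneg : ∫⁻ t, (-f t).toENNReal ∂μ = ∫⁻ t, (-g t).toENNReal ∂μ :=
    lintegral_congr_ae (h.mono fun t ht => by simp only [ht])
  rw [eintegral_def, eintegral_def, hpos, hneg]

theorem eintegral_mono_ae {f g : T → EReal} (h : ∀ᵐ t ∂μ, f t ≤ g t) :
    eintegral μ f ≤ eintegral μ g := by
  have hpos : ∫⁻ t, (f t).toENNReal ∂μ ≤ ∫⁻ t, (g t).toENNReal ∂μ :=
    lintegral_mono_ae (h.mono fun t ht => EReal.toENNReal_le_toENNReal ht)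
  have hneg : ∫⁻ t, (-g t).toENNReal ∂μ ≤ ∫⁻ t, (-f t).toENNReal ∂μ :=
    lintegral_mono_ae (h.mono fun t ht => EReal.toENNReal_le_toENNReal (EReal.neg_le_neg_iff.2 ht))
  rw [eintegral_def, eintegral_def]
  split_ifs with hf hg hg
  · exact le_rfl
  · exact absurd (top_le_iff.1 (hf ▸ hpos)) hg
  · exact le_top
  · exact EReal.sub_le_sub (EReal.coe_ennreal_le_coe_ennreal_iff.2 hpos)
      (EReal.coe_ennreal_le_coe_ennreal_iff.2 hneg)

theorem eintegral_nonneg_iff {f : T → EReal} :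
    0 ≤ eintegral μ f ↔ ∫⁻ t, (-f t).toENNReal ∂μ ≤ ∫⁻ t, (f t).toENNReal ∂μ := by
  rw [eintegral_def]
  split_ifs with hf
  · simp [hf]
  · rw [EReal.sub_nonneg (Or.inl (by simpa using hf)) (Or.inl (EReal.coe_ennreal_ne_bot _)),
      EReal.coe_ennreal_le_coe_ennreal_iff]

theorem eintegral_lt_top_iff {f : T → EReal} :
    eintegral μ f < ⊤ ↔ ∫⁻ t, (f t).toENNReal ∂μ ≠ ⊤ := by
  rw [eintegral_def]
  split_ifs with hf
  · simp [hf]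
  · refine iff_of_true (EReal.sub_lt_of_lt_add ?_) hf
    rw [EReal.top_add_of_ne_bot (EReal.coe_ennreal_ne_bot _), lt_top_iff_ne_top, Ne,
      EReal.coe_ennreal_eq_top_iff]
    exact hf

theorem lintegral_toENNReal_ne_top_of_eintegral_eq_coe {f : T → EReal} {r : ℝ}
    (h : eintegral μ f = r) :
    ∫⁻ t, (f t).toENNReal ∂μ ≠ ⊤ ∧ ∫⁻ t, (-f t).toENNReal ∂μ ≠ ⊤ := by
  have hpos : ∫⁻ t, (f t).toENNReal ∂μ ≠ ⊤ :=
    eintegral_lt_top_iff.1 (h ▸ EReal.coe_lt_top r)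
  refine ⟨hpos, fun hneg => EReal.coe_ne_bot r ?_⟩
  rw [← h, eintegral_def, if_neg hpos, hneg, EReal.coe_ennreal_top, EReal.sub_top]

theorem eintegral_coe_mul_nonneg_iff {c : ℝ} (hc : 0 < c) (f : T → EReal) :
    0 ≤ eintegral μ (fun t => (c : EReal) * f t) ↔ 0 ≤ eintegral μ f := by
  have hmul (a : EReal) : ((c : EReal) * a).toENNReal = ENNReal.ofReal c * a.toENNReal := by
    rw [EReal.toENNReal_mul (EReal.coe_nonneg.2 hc.le), EReal.real_coe_toENNReal]
  simp only [eintegral_nonneg_iff, ← mul_neg, hmul,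
    lintegral_const_mul' _ _ ENNReal.ofReal_ne_top]
  exact ENNReal.mul_le_mul_iff_right (by simpa using hc) ENNReal.ofReal_ne_top

theorem integrable_toReal_of_lintegral_toENNReal_ne_top {f : T → EReal} (hf : AEMeasurable f μ)
    (hpos : ∫⁻ t, (f t).toENNReal ∂μ ≠ ⊤) (hneg : ∫⁻ t, (-f t).toENNReal ∂μ ≠ ⊤) :
    Integrable (fun t => (f t).toReal) μ := by
  have h₁ := integrable_toReal_of_lintegral_ne_top
    (measurable_ereal_toENNReal.comp_aemeasurable hf) hpos
  have h₂ := integrable_toReal_of_lintegral_ne_top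
    (measurable_ereal_toENNReal.comp_aemeasurable hf.neg) hneg
  exact (h₁.sub h₂).congr (ae_of_all _ fun t => (EReal.toReal_eq_toENNReal_sub (f t)).symm)

theorem ae_eq_coe_toReal_of_lintegral_toENNReal_ne_top {f : T → EReal} (hf : AEMeasurable f μ)
    (hpos : ∫⁻ t, (f t).toENNReal ∂μ ≠ ⊤) (hneg : ∫⁻ t, (-f t).toENNReal ∂μ ≠ ⊤) :
    f =ᵐ[μ] fun t => ((f t).toReal : EReal) := by
  filter_upwards [ae_lt_top' (measurable_ereal_toENNReal.comp_aemeasurable hf) hpos,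
    ae_lt_top' (measurable_ereal_toENNReal.comp_aemeasurable hf.neg) hneg] with t htop hbot
  refine (EReal.coe_toReal (by simpa using htop.ne) fun h => ?_).symm
  simp [h] at hbot

theorem eintegral_coe_eq_integral {g : T → ℝ} (hg : Integrable g μ) :
    eintegral μ (fun t => (g t : EReal)) = ∫ t, g t ∂μ := by
  have hpos : ∫⁻ t, ENNReal.ofReal (g t) ∂μ ≠ ⊤ := hg.lintegral_lt_top.ne
  have hneg : ∫⁻ t, ENNReal.ofReal (-g t) ∂μ ≠ ⊤ := hg.neg.lintegral_lt_top.ne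
  rw [eintegral_def, if_neg (show ¬∫⁻ t, ((g t : EReal)).toENNReal ∂μ = ⊤ from hpos)]
  simp only [← EReal.coe_neg, EReal.real_coe_toENNReal]
  rw [integral_eq_lintegral_pos_part_sub_lintegral_neg_part hg, EReal.coe_sub,
    EReal.coe_ennreal_toReal hpos, EReal.coe_ennreal_toReal hneg]

theorem lintegral_toENNReal_coe_add_eq_top {p : T → ℝ} (hp : Integrable p μ) {q : T → EReal}
    (hq : ∫⁻ t, (q t).toENNReal ∂μ = ⊤) : ∫⁻ t, ((p t : EReal) + q t).toENNReal ∂μ = ⊤ := by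
  have h := lintegral_mono (μ := μ) fun t =>
    EReal.toENNReal_le_toENNReal_add_ofReal_neg (p t) (q t)
  have hneg : AEMeasurable (fun t => ENNReal.ofReal (-p t)) μ :=
    hp.neg.aemeasurable.ennreal_ofReal
  rw [hq, lintegral_add_right' _ hneg, top_le_iff, ENNReal.add_eq_top] at h
  exact h.resolve_right hp.neg.lintegral_lt_top.ne

-- Either an infinite part of `q` makes the same part of `p + q` infinite, or `q` is integrable.
theorem eintegral_coe_add {p : T → ℝ} (hp : Integrable p μ) {q : T → EReal}
    (hq : AEMeasurable q μ) :
    eintegral μ (fun t => (p t : EReal) + q t)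
      = eintegral μ (fun t => (p t : EReal)) + eintegral μ q := by
  by_cases hA : ∫⁻ t, (q t).toENNReal ∂μ = ⊤
  · rw [eintegral_def, if_pos (lintegral_toENNReal_coe_add_eq_top hp hA), eintegral_def q,
      if_pos hA, EReal.add_top_of_ne_bot (by simp [eintegral_coe_eq_integral hp])]
  by_cases hB : ∫⁻ t, (-q t).toENNReal ∂μ = ⊤
  · have hS : ∫⁻ t, ((p t : EReal) + q t).toENNReal ∂μ ≠ ⊤ := by
      refine ne_top_of_le_ne_top (ENNReal.add_ne_top.2 ⟨hp.lintegral_lt_top.ne, hA⟩) ?_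
      rw [← lintegral_add_left' hp.aemeasurable.ennreal_ofReal]
      exact lintegral_mono fun t => EReal.toENNReal_add_le
    have hneg (t : T) : -((p t : EReal) + q t) = ((-p t : ℝ) : EReal) + -q t := by
      rw [EReal.neg_add (Or.inl (EReal.coe_ne_bot _)) (Or.inl (EReal.coe_ne_top _)),
        sub_eq_add_neg, EReal.coe_neg]
    have hS' := lintegral_toENNReal_coe_add_eq_top hp.neg hB
    simp only [Pi.neg_apply, ← hneg] at hS'
    rw [eintegral_def, if_neg hS, hS', eintegral_def q, if_neg hA, hB, EReal.coe_ennreal_top,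
      EReal.sub_top, EReal.sub_top, EReal.add_bot]
  have hqr := integrable_toReal_of_lintegral_toENNReal_ne_top hq hA hB
  have hq_ae := ae_eq_coe_toReal_of_lintegral_toENNReal_ne_top hq hA hB
  have hpq : (fun t => (p t : EReal) + q t) =ᵐ[μ] fun t => ((p t + (q t).toReal : ℝ) : EReal) := by
    filter_upwards [hq_ae] with t ht
    conv_lhs => rw [ht]
    rw [EReal.coe_add]
  rw [eintegral_congr_ae hpq, eintegral_congr_ae hq_ae,
    eintegral_coe_eq_integral (g := fun t => p t + (q t).toReal) (hp.add hqr),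
    eintegral_coe_eq_integral hp, eintegral_coe_eq_integral hqr, integral_add hp hqr,
    EReal.coe_add]

theorem eintegral_nonneg_of_tendsto_of_antitone {f : ℕ → T → EReal} {g : T → EReal}
    (hf : ∀ n, AEMeasurable (f n) μ) (h_anti : ∀ᵐ t ∂μ, Antitone fun n => f n t)
    (h_tendsto : ∀ᵐ t ∂μ, Tendsto (fun n => f n t) atTop (𝓝 (g t)))
    (h0 : eintegral μ (f 0) < ⊤) (h_nonneg : ∀ n, 0 ≤ eintegral μ (f n)) :
    0 ≤ eintegral μ g := by
  have hpos : Tendsto (fun n => ∫⁻ t, (f n t).toENNReal ∂μ) atTop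
      (𝓝 (∫⁻ t, (g t).toENNReal ∂μ)) :=
    lintegral_tendsto_of_tendsto_of_antitone
      (fun n => measurable_ereal_toENNReal.comp_aemeasurable (hf n))
      (h_anti.mono fun t ht _ _ hmn => EReal.toENNReal_le_toENNReal (ht hmn))
      (eintegral_lt_top_iff.1 h0)
      (h_tendsto.mono fun t ht => (EReal.continuous_toENNReal.tendsto _).comp ht)
  have hneg : Tendsto (fun n => ∫⁻ t, (-f n t).toENNReal ∂μ) atTop
      (𝓝 (∫⁻ t, (-g t).toENNReal ∂μ)) :=
    lintegral_tendsto_of_tendsto_of_monotone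
      (fun n => measurable_ereal_toENNReal.comp_aemeasurable (hf n).neg)
      (h_anti.mono fun t ht _ _ hmn =>
        EReal.toENNReal_le_toENNReal (EReal.neg_le_neg_iff.2 (ht hmn)))
      (h_tendsto.mono fun t ht =>
        (EReal.continuous_toENNReal.tendsto _).comp ((continuous_neg.tendsto _).comp ht))
  rw [eintegral_nonneg_iff]
  exact le_of_tendsto_of_tendsto' hneg hpos fun n => eintegral_nonneg_iff.1 (h_nonneg n)

end eintegral

noncomputable def diffQuot (f : ℝ → ℝ) (u v s : ℝ) : ℝ := (f (u + s * (v - u)) - f u) / s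

section diffQuot

variable {f : ℝ → ℝ} {D : Set ℝ} {u v : ℝ}

theorem diffQuot_one (f : ℝ → ℝ) (u v : ℝ) : diffQuot f u v 1 = f v - f u := by
  simp [diffQuot]

theorem mul_diffQuot {s : ℝ} (hs : s ≠ 0) : s * diffQuot f u v s = f (u + s * (v - u)) - f u :=
  mul_div_cancel₀ _ hs

theorem measurable_diffQuot {T : Type*} [MeasurableSpace T] (hf : Measurable f) {x y : T → ℝ}
    (hx : Measurable x) (hy : Measurable y) (s : ℝ) :
    Measurable fun t => diffQuot f (x t) (y t) s := by
  unfold diffQuot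
  fun_prop

theorem ConvexOn.diffQuot_mono (hf : ConvexOn ℝ D f) (hu : u ∈ D) (hv : v ∈ D) {s s' : ℝ}
    (hs : 0 < s) (hss' : s ≤ s') (hs' : s' ≤ 1) : diffQuot f u v s ≤ diffQuot f u v s' := by
  have hseg : ConvexOn ℝ (Icc (0 : ℝ) 1) (f ∘ AffineMap.lineMap u v) :=
    (hf.comp_affineMap _).subset (fun s hs => by
      simpa [AffineMap.lineMap_apply_ring', add_comm] using hf.1.add_smul_sub_mem hu hv hs)
      (convex_Icc (0 : ℝ) 1)
  have h := hseg.secant_mono (a := 0) ⟨le_rfl, zero_le_one⟩ ⟨hs.le, hss'.trans hs'⟩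
    ⟨hs.le.trans hss', hs'⟩ hs.ne' (hs.trans_le hss').ne' hss'
  simpa [diffQuot, AffineMap.lineMap_apply_ring', add_comm] using h

theorem ConvexOn.le_diffQuot_of_tendsto (hf : ConvexOn ℝ D f) (hu : u ∈ D) (hv : v ∈ D)
    {d : EReal} (hd : Tendsto (fun s => (diffQuot f u v s : EReal)) (𝓝[>] 0) (𝓝 d)) {s : ℝ}
    (hs : 0 < s) (hs1 : s ≤ 1) : d ≤ diffQuot f u v s := by
  refine le_of_tendsto hd ?_
  filter_upwards [Ioo_mem_nhdsGT hs] with s' hs'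
  exact EReal.coe_le_coe_iff.2 (hf.diffQuot_mono hu hv hs'.1 hs'.2.le hs1)

end diffQuot

theorem convexOn_toReal {φ : ℝ → EReal} (hbot : ∀ u, φ u ≠ ⊥)
    (hconv : ∀ u v a b : ℝ, 0 ≤ a → 0 ≤ b → a + b = 1 →
      φ (a * u + b * v) ≤ (a : EReal) * φ u + (b : EReal) * φ v) :
    ConvexOn ℝ {u | φ u ≠ ⊤} fun u => (φ u).toReal := by
  have hle {u v a b : ℝ} (hu : φ u ≠ ⊤) (hv : φ v ≠ ⊤) (ha : 0 ≤ a) (hb : 0 ≤ b)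
      (hab : a + b = 1) :
      φ (a • u + b • v) ≤ ((a * (φ u).toReal + b * (φ v).toReal : ℝ) : EReal) := by
    rw [EReal.coe_add, EReal.coe_mul, EReal.coe_mul, EReal.coe_toReal hu (hbot u),
      EReal.coe_toReal hv (hbot v)]
    exact hconv u v a b ha hb hab
  refine ⟨fun u hu v hv a b ha hb hab => ?_, fun u hu v hv a b ha hb hab => ?_⟩
  · exact ((hle hu hv ha hb hab).trans_lt (EReal.coe_lt_top _)).ne
  · have h := EReal.toReal_le_toReal (hle hu hv ha hb hab) (hbot _) (EReal.coe_ne_top _)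
    rwa [EReal.toReal_coe] at h

section Phi

variable {T : Type*} [MeasurableSpace T] {μ : Measure T} {φ : ℝ → EReal}

theorem ae_ne_top_of_Phi_lt_top (hφ : Measurable φ) {x : T → ℝ} (hx : Measurable x)
    (h : Phi μ φ x < ⊤) : ∀ᵐ t ∂μ, φ (x t) ≠ ⊤ := by
  filter_upwards [ae_lt_top (measurable_ereal_toENNReal.comp (hφ.comp hx))
    (eintegral_lt_top_iff.1 h)] with t ht
  simpa using ht.ne

theorem Phi_eq_add_eintegral_sub (hφ : Measurable φ) (hbot : ∀ u, φ u ≠ ⊥) {xb y : T → ℝ}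
    (hxb : Measurable xb) (hy : Measurable y) {r : ℝ} (hr : Phi μ φ xb = r)
    (hy_fin : ∀ᵐ t ∂μ, φ (y t) ≠ ⊤) :
    Phi μ φ y
      = r + eintegral μ (fun t => (((φ (y t)).toReal - (φ (xb t)).toReal : ℝ) : EReal)) := by
  have hxbm : AEMeasurable (fun t => φ (xb t)) μ := (hφ.comp hxb).aemeasurable
  obtain ⟨hpos, hneg⟩ := lintegral_toENNReal_ne_top_of_eintegral_eq_coe hr
  have hp := integrable_toReal_of_lintegral_toENNReal_ne_top hxbm hpos hneg
  have hsplit : (fun t => φ (y t)) =ᵐ[μ] fun t =>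
      ((φ (xb t)).toReal : EReal) + (((φ (y t)).toReal - (φ (xb t)).toReal : ℝ) : EReal) := by
    filter_upwards [hy_fin] with t ht
    rw [← EReal.coe_add, add_sub_cancel, EReal.coe_toReal ht (hbot _)]
  have hdiff : AEMeasurable (fun t => (((φ (y t)).toReal - (φ (xb t)).toReal : ℝ) : EReal)) μ :=
    (measurable_coe_real_ereal.comp
      ((hφ.comp hy).ereal_toReal.sub (hφ.comp hxb).ereal_toReal)).aemeasurable
  rw [Phi, eintegral_congr_ae hsplit, eintegral_coe_add hp hdiff,
    ← eintegral_congr_ae (ae_eq_coe_toReal_of_lintegral_toENNReal_ne_top hxbm hpos hneg)]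
  exact congrArg (· + _) hr

variable {dphi : ℝ → EReal} {xb x : T → ℝ} {r : ℝ}

theorem Phi_le_of_eintegral_nonneg (hφm : Measurable φ) (hbot : ∀ u, φ u ≠ ⊥)
    (hφ : ConvexOn ℝ {u | φ u ≠ ⊤} fun u => (φ u).toReal)
    (hdphi : ∀ u v : ℝ, φ u ≠ ⊤ → φ v ≠ ⊤ →
      Tendsto (fun s => (diffQuot (fun u => (φ u).toReal) u v s : EReal)) (𝓝[>] 0)
        (𝓝 (dphi u * ((v : EReal) - (u : EReal)))))
    (hxb : Measurable xb) (hx : Measurable x) (hr : Phi μ φ xb = r) (hPx : Phi μ φ x < ⊤)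
    (h : 0 ≤ eintegral μ (fun t => dphi (xb t) * ((x t : EReal) - (xb t : EReal)))) :
    Phi μ φ xb ≤ Phi μ φ x := by
  have hx_fin := ae_ne_top_of_Phi_lt_top hφm hx hPx
  have hle : 0 ≤ eintegral μ (fun t => (((φ (x t)).toReal - (φ (xb t)).toReal : ℝ) : EReal)) := by
    refine h.trans (eintegral_mono_ae ?_)
    filter_upwards [ae_ne_top_of_Phi_lt_top hφm hxb (hr ▸ EReal.coe_lt_top r), hx_fin]
      with t hxbt hxt
    simpa only [diffQuot_one] using
      hφ.le_diffQuot_of_tendsto hxbt hxt (hdphi _ _ hxbt hxt) one_pos le_rfl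
  rw [Phi_eq_add_eintegral_sub hφm hbot hxb hx hr hx_fin, hr]
  exact le_add_of_nonneg_right hle

theorem eintegral_diffQuot_nonneg_of_Phi_le (hφm : Measurable φ) (hbot : ∀ u, φ u ≠ ⊥)
    (hφ : ConvexOn ℝ {u | φ u ≠ ⊤} fun u => (φ u).toReal)
    (hxb : Measurable xb) (hx : Measurable x) (hr : Phi μ φ xb = r) (hPx : Phi μ φ x < ⊤)
    {s : ℝ} (hs : s ∈ Ioc (0 : ℝ) 1) (hmin : Phi μ φ xb ≤ Phi μ φ (xb + s • (x - xb))) :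
    0 ≤ eintegral μ (fun t => (diffQuot (fun u => (φ u).toReal) (xb t) (x t) s : EReal)) := by
  have hy : Measurable (xb + s • (x - xb)) := hxb.add ((hx.sub hxb).const_smul s)
  have hy_fin : ∀ᵐ t ∂μ, φ ((xb + s • (x - xb)) t) ≠ ⊤ := by
    filter_upwards [ae_ne_top_of_Phi_lt_top hφm hxb (hr ▸ EReal.coe_lt_top r),
      ae_ne_top_of_Phi_lt_top hφm hx hPx] with t hxbt hxt
    exact hφ.1.add_smul_sub_mem hxbt hxt (Ioc_subset_Icc_self hs)
  rw [Phi_eq_add_eintegral_sub hφm hbot hxb hy hr hy_fin, hr,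
    (EReal.addLECancellable_coe r).le_add_iff_nonneg_right] at hmin
  rw [← eintegral_coe_mul_nonneg_iff hs.1]
  convert hmin using 3 with t
  rw [← EReal.coe_mul, mul_diffQuot hs.1.ne']
  simp [smul_eq_mul]

theorem eintegral_nonneg_of_Phi_le_segment (hφm : Measurable φ) (hbot : ∀ u, φ u ≠ ⊥)
    (hφ : ConvexOn ℝ {u | φ u ≠ ⊤} fun u => (φ u).toReal)
    (hdphi : ∀ u v : ℝ, φ u ≠ ⊤ → φ v ≠ ⊤ →
      Tendsto (fun s => (diffQuot (fun u => (φ u).toReal) u v s : EReal)) (𝓝[>] 0)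
        (𝓝 (dphi u * ((v : EReal) - (u : EReal)))))
    (hxb : Measurable xb) (hx : Measurable x) (hr : Phi μ φ xb = r) (hPx : Phi μ φ x < ⊤)
    (hmin : ∀ s ∈ Ioc (0 : ℝ) 1, Phi μ φ xb ≤ Phi μ φ (xb + s • (x - xb))) :
    0 ≤ eintegral μ (fun t => dphi (xb t) * ((x t : EReal) - (xb t : EReal))) := by
  have hs (n : ℕ) : 1 / ((n : ℝ) + 1) ∈ Ioc (0 : ℝ) 1 :=
    ⟨Nat.one_div_pos_of_nat, by simpa using Nat.one_div_le_one_div (α := ℝ) n.zero_le⟩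
  have hs_tendsto : Tendsto (fun n : ℕ => 1 / ((n : ℝ) + 1)) atTop (𝓝[>] 0) :=
    tendsto_nhdsWithin_iff.2 ⟨tendsto_one_div_add_atTop_nhds_zero_nat,
      Eventually.of_forall fun n => (hs n).1⟩
  have hfin : ∀ᵐ t ∂μ, φ (xb t) ≠ ⊤ ∧ φ (x t) ≠ ⊤ :=
    (ae_ne_top_of_Phi_lt_top hφm hxb (hr ▸ EReal.coe_lt_top r)).and
      (ae_ne_top_of_Phi_lt_top hφm hx hPx)
  refine eintegral_nonneg_of_tendsto_of_antitone
    (f := fun n t => (diffQuot (fun u => (φ u).toReal) (xb t) (x t) (1 / ((n : ℝ) + 1)) : EReal))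
    (fun n => (measurable_coe_real_ereal.comp
      (measurable_diffQuot hφm.ereal_toReal hxb hx _)).aemeasurable) ?_ ?_ ?_
    fun n => eintegral_diffQuot_nonneg_of_Phi_le hφm hbot hφ hxb hx hr hPx (hs n) (hmin _ (hs n))
  · filter_upwards [hfin] with t ⟨hxbt, hxt⟩ m n hmn
    exact EReal.coe_le_coe_iff.2
      (hφ.diffQuot_mono hxbt hxt (hs n).1 (Nat.one_div_le_one_div hmn) (hs m).2)
  · filter_upwards [hfin] with t ⟨hxbt, hxt⟩
    exact (hdphi _ _ hxbt hxt).comp hs_tendsto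
  · have h := Phi_eq_add_eintegral_sub hφm hbot hxb hx hr (hfin.mono fun t ht => ht.2)
    simp only [CharP.cast_eq_zero, zero_add, div_one, diffQuot_one]
    refine lt_top_iff_ne_top.2 ((EReal.add_ne_top_iff_ne_top_right (EReal.coe_ne_bot r)
      (EReal.coe_ne_top r)).1 ?_)
    exact h ▸ hPx.ne

end Phi

section Feas

variable {T : Type*} [MeasurableSpace T] {μ : Measure T} {m : ℕ} {ψ : Fin m → T → ℝ}
  {b : Fin m → ℝ} {x y : T → ℝ}

theorem add_smul_mem_Feas (hx : x ∈ Feas μ ψ b) (hy : y ∈ Feas μ ψ fun _ => 0) (a : ℝ) :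
    x + a • y ∈ Feas μ ψ b := by
  have heq (k : Fin m) :
      (fun t => (x + a • y) t * ψ k t) = fun t => x t * ψ k t + a * (y t * ψ k t) := by
    ext t
    simp only [Pi.add_apply, Pi.smul_apply, smul_eq_mul]
    ring
  refine ⟨hx.1.add (hy.1.const_smul a), fun k => ?_, fun k => ?_⟩
  · rw [heq]
    exact (hx.2.1 k).add ((hy.2.1 k).const_mul a)
  · rw [heq, integral_add (hx.2.1 k) ((hy.2.1 k).const_mul a), integral_const_mul, hx.2.2 k,
      hy.2.2 k, mul_zero, add_zero]

theorem sub_mem_Feas (hx : x ∈ Feas μ ψ b) (hy : y ∈ Feas μ ψ b) :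
    x - y ∈ Feas μ ψ fun _ => 0 := by
  have heq (k : Fin m) :
      (fun t => (x - y) t * ψ k t) = fun t => x t * ψ k t - y t * ψ k t := by
    ext t
    simp only [Pi.sub_apply, sub_mul]
  refine ⟨hx.1.sub hy.1, fun k => ?_, fun k => ?_⟩
  · rw [heq]
    exact (hx.2.1 k).sub (hy.2.1 k)
  · rw [heq, integral_sub (hx.2.1 k) (hy.2.1 k), hx.2.2 k, hy.2.2 k, sub_self]

end Feas

theorem stmt_14_general {T : Type*} [MeasurableSpace T] (μ : Measure T) (φ : ℝ → EReal)
(hbot : ∀ u, φ u ≠ ⊥) (hlsc : LowerSemicontinuous φ)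
    (hconv : ∀ u v a b' : ℝ, 0 ≤ a → 0 ≤ b' → a + b' = 1 →
      φ (a * u + b' * v) ≤ (a : EReal) * φ u + (b' : EReal) * φ v)
(dphi : ℝ → EReal)
    (hdphi : ∀ u v : ℝ, φ u ≠ ⊤ → φ v ≠ ⊤ →
      Tendsto (fun s : ℝ => ((((φ (u + s * (v - u))).toReal - (φ u).toReal) / s : ℝ) : EReal))
        (𝓝[>] (0 : ℝ)) (𝓝 (dphi u * ((v : EReal) - (u : EReal)))))
    (m : ℕ) (ψ : Fin m → T → ℝ) (b : Fin m → ℝ)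
    (X : Subspace ℝ (T → ℝ)) (hX : ∀ x ∈ X, Measurable x)
    (xb : T → ℝ) (hxbX : xb ∈ X) (hxbF : xb ∈ Feas μ ψ b)
    (hfin : ∃ r : ℝ, Phi μ φ xb = (r : EReal)) :
    (∀ x ∈ X, x ∈ Feas μ ψ b → Phi μ φ xb ≤ Phi μ φ x) ↔
      (∀ u : T → ℝ,
        (∃ c : ℝ, ∃ x : T → ℝ, 0 ≤ c ∧ x ∈ X ∧ Phi μ φ x < ⊤ ∧ u = c • (x - xb)) →
        u ∈ Feas μ ψ (fun _ => (0 : ℝ)) →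
        0 ≤ eintegral μ (fun t => dphi (xb t) * ((u t : ℝ) : EReal))) := by
  obtain ⟨r, hr⟩ := hfin
  have hφm : Measurable φ := hlsc.measurable
  have hφ := convexOn_toReal hbot hconv
  constructor
  · rintro hopt u ⟨c, x, hc, hxX, hPx, rfl⟩ hu
    obtain rfl | hc := hc.eq_or_lt
    · simp [eintegral_nonneg_iff]
    have hseg (s : ℝ) (hs : s ∈ Ioc (0 : ℝ) 1) : Phi μ φ xb ≤ Phi μ φ (xb + s • (x - xb)) := by
      have hxs : xb + s • (x - xb) = xb + (s / c) • c • (x - xb) := by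
        rw [smul_smul, div_mul_cancel₀ _ hc.ne']
      exact hopt _ (X.add_mem hxbX (X.smul_mem s (X.sub_mem hxX hxbX)))
        (hxs ▸ add_smul_mem_Feas hxbF hu _)
    have h := eintegral_nonneg_of_Phi_le_segment hφm hbot hφ hdphi hxbF.1 (hX x hxX) hr hPx hseg
    rw [← eintegral_coe_mul_nonneg_iff hc] at h
    convert h using 3 with t
    simp only [Pi.smul_apply, Pi.sub_apply, smul_eq_mul, EReal.coe_mul, EReal.coe_sub,
      mul_left_comm]
  · intro hcond x hxX hxF
    obtain hPx | hPx := (le_top : Phi μ φ x ≤ ⊤).lt_or_eq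
    · refine Phi_le_of_eintegral_nonneg hφm hbot hφ hdphi hxbF.1 hxF.1 hr hPx ?_
      simpa [EReal.coe_sub] using hcond (x - xb) ⟨1, x, zero_le_one, hxX, hPx,
        (one_smul ℝ _).symm⟩ (sub_mem_Feas hxF hxbF)
    · exact hPx ▸ le_top

/-- Characterization of optimality via the integral condition: a feasible `x̄` with `Φ(x̄) ∈ ℝ`
is optimal for (P) iff `∫ φ'(x̄)·u dμ ≥ 0` for every `u ∈ K_x̄ = [ℝ₊(dom Φ - x̄)] ∩ X̃⁰`. -/
theorem stmt_14 {T : Type*} [MeasurableSpace T] (μ : Measure T) (φ : ℝ → EReal)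
(hbot : ∀ u, φ u ≠ ⊥) (hproper : ∃ u, φ u ≠ ⊤) (hlsc : LowerSemicontinuous φ)
    (hconv : ∀ u v a b' : ℝ, 0 ≤ a → 0 ≤ b' → a + b' = 1 →
      φ (a * u + b' * v) ≤ (a : EReal) * φ u + (b' : EReal) * φ v)
    (hstrict : ∀ u v : ℝ, φ u ≠ ⊤ → φ v ≠ ⊤ → u ≠ v → ∀ a b' : ℝ, 0 < a → 0 < b' → a + b' = 1 →
      φ (a * u + b' * v) < (a : EReal) * φ u + (b' : EReal) * φ v)
    (hint : (interior {u : ℝ | φ u ≠ ⊤}).Nonempty)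
(dphi : ℝ → EReal)
    (hdphi : ∀ u v : ℝ, φ u ≠ ⊤ → φ v ≠ ⊤ →
      Tendsto (fun s : ℝ => ((((φ (u + s * (v - u))).toReal - (φ u).toReal) / s : ℝ) : EReal))
        (𝓝[>] (0 : ℝ)) (𝓝 (dphi u * ((v : EReal) - (u : EReal)))))
    (m : ℕ) (ψ : Fin m → T → ℝ) (hψ : ∀ k, Measurable (ψ k)) (b : Fin m → ℝ)
    (X : Subspace ℝ (T → ℝ)) (hX : ∀ x ∈ X, Measurable x)
    (xb : T → ℝ) (hxbX : xb ∈ X) (hxbF : xb ∈ Feas μ ψ b)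
    (hfin : ∃ r : ℝ, Phi μ φ xb = (r : EReal)) :
    (∀ x ∈ X, x ∈ Feas μ ψ b → Phi μ φ xb ≤ Phi μ φ x) ↔
      (∀ u : T → ℝ,
        (∃ c : ℝ, ∃ x : T → ℝ, 0 ≤ c ∧ x ∈ X ∧ Phi μ φ x < ⊤ ∧ u = c • (x - xb)) →
        u ∈ Feas μ ψ (fun _ => (0 : ℝ)) →
        0 ≤ eintegral μ (fun t => dphi (xb t) * ((u t : ℝ) : EReal))) :=
  stmt_14_general μ φ hbot hlsc hconv dphi hdphi m ψ b X hX xb hxbX hxbF hfin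
end

section
/- Boundary avoidance: suppose a := inf(dom φ) ∈ ℝ and φ'(a) := lim_{u→a⁺} φ'(u) = -∞, and suppose (P) has a feasible x̃ ∈ dom Φ with x̃(t) ∈ int(dom φ) for a.e. t. If x̄ is an optimal solution of (P) with Φ(x̄) ∈ ℝ, then μ({t : x̄(t) = a}) = 0. -/
/-!
Perturb the optimum towards the interior point: `xₛ := x̄ + s (x̃ - x̄)` stays feasible for
`s ∈ (0, 1]`, so `∫ (φ ∘ xₛ - φ ∘ x̄) / s ≥ 0`, while convexity bounds these difference quotients
above by the integrable function `φ ∘ x̃ - φ ∘ x̄`. On `{x̄ = a}` they tend to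
`φ'(a) (x̃ - a) = -∞` as `s ↓ 0`, so Fatou's lemma applied to the nonnegative gaps
`φ ∘ x̃ - φ ∘ x̄ - (φ ∘ xₛ - φ ∘ x̄) / s` forces `μ {x̄ = a} = 0`.
-/

open MeasureTheory ENNReal Filter Set Topology

lemma epos_of_ne_top {x : EReal} (hx : x ≠ ⊤) : epos x = ENNReal.ofReal x.toReal := if_neg hx

lemma epos_top : epos ⊤ = ⊤ := if_pos rfl

lemma epos_neg_of_ne_bot {x : EReal} (hx : x ≠ ⊥) : epos (-x) = ENNReal.ofReal (-x.toReal) := by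
  rw [epos_of_ne_top (EReal.neg_eq_top_iff.not.2 hx), EReal.toReal_neg_eq]

lemma epos_mono : Monotone epos := by
  intro x y hxy
  rcases eq_or_ne y ⊤ with rfl | hy
  · simp [epos_top]
  rcases eq_or_ne x ⊥ with rfl | hx
  · simp [epos]
  rw [epos_of_ne_top (ne_top_of_le_ne_top hy hxy), epos_of_ne_top hy]
  exact ENNReal.ofReal_le_ofReal (EReal.toReal_le_toReal hxy hx hy)

lemma measurable_epos : Measurable epos := epos_mono.measurable

lemma ofReal_abs_toReal_le_epos_add_epos_neg (x : EReal) :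
    ENNReal.ofReal |x.toReal| ≤ epos x + epos (-x) := by
  induction x using EReal.rec with
  | bot => simp
  | top => simp [epos_top]
  | coe r =>
    rw [epos_of_ne_top (EReal.coe_ne_top r), epos_neg_of_ne_bot (EReal.coe_ne_bot r),
      EReal.toReal_coe]
    rcases le_total 0 r with h | h
    · rw [abs_of_nonneg h]; exact le_self_add
    · rw [abs_of_nonpos h]; exact le_add_self

section eintegral

variable {T : Type*} [MeasurableSpace T] {μ : Measure T} {f : T → EReal}

lemma lintegral_epos_ne_top_of_eintegral_ne_top (h : eintegral μ f ≠ ⊤) :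
    ∫⁻ t, epos (f t) ∂μ ≠ ⊤ := fun hP => h (if_pos hP)

lemma lintegral_epos_neg_ne_top_of_eintegral_ne_bot (ht : eintegral μ f ≠ ⊤)
    (hb : eintegral μ f ≠ ⊥) : ∫⁻ t, epos (-f t) ∂μ ≠ ⊤ := by
  intro hN
  apply hb
  rw [eintegral, if_neg (lintegral_epos_ne_top_of_eintegral_ne_top ht), hN,
    EReal.coe_ennreal_top, EReal.sub_top]

lemma eintegral_ne_top_of_lintegral_epos_ne_top (hP : ∫⁻ t, epos (f t) ∂μ ≠ ⊤) :
    eintegral μ f ≠ ⊤ := by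
  rw [eintegral, if_neg hP]
  exact ne_top_of_le_ne_top (by simpa using hP)
    (EReal.sub_le_of_le_add (le_add_of_nonneg_right (EReal.coe_ennreal_nonneg _)))

lemma ae_ne_top_of_eintegral_ne_top (hm : Measurable f) (h : eintegral μ f ≠ ⊤) :
    ∀ᵐ t ∂μ, f t ≠ ⊤ := by
  filter_upwards [ae_lt_top (measurable_epos.comp hm)
    (lintegral_epos_ne_top_of_eintegral_ne_top h)] with t ht hf
  rw [Function.comp_apply, hf, epos_top] at ht
  exact ht.ne rfl

lemma integrable_toReal_of_eintegral_ne_top (hm : Measurable f) (ht : eintegral μ f ≠ ⊤)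
    (hb : eintegral μ f ≠ ⊥) : Integrable (fun t => (f t).toReal) μ := by
  refine ⟨(measurable_ereal_toReal.comp hm).aestronglyMeasurable, ?_⟩
  rw [hasFiniteIntegral_iff_norm]
  calc ∫⁻ t, ENNReal.ofReal ‖(f t).toReal‖ ∂μ ≤ ∫⁻ t, (epos (f t) + epos (-f t)) ∂μ :=
        lintegral_mono fun t => ofReal_abs_toReal_le_epos_add_epos_neg (f t)
    _ = (∫⁻ t, epos (f t) ∂μ) + ∫⁻ t, epos (-f t) ∂μ :=
        lintegral_add_left (measurable_epos.comp hm) _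
    _ < ⊤ := ENNReal.add_lt_top.2 ⟨(lintegral_epos_ne_top_of_eintegral_ne_top ht).lt_top,
        (lintegral_epos_neg_ne_top_of_eintegral_ne_bot ht hb).lt_top⟩

lemma eintegral_eq_integral_toReal (hb : ∀ᵐ t ∂μ, f t ≠ ⊥) (ht : ∀ᵐ t ∂μ, f t ≠ ⊤)
    (hi : Integrable (fun t => (f t).toReal) μ) :
    eintegral μ f = ((∫ t, (f t).toReal ∂μ : ℝ) : EReal) := by
  have hP : ∫⁻ t, epos (f t) ∂μ = ∫⁻ t, ENNReal.ofReal (f t).toReal ∂μ :=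
    lintegral_congr_ae (ht.mono fun t => epos_of_ne_top)
  have hN : ∫⁻ t, epos (-f t) ∂μ = ∫⁻ t, ENNReal.ofReal (-(f t).toReal) ∂μ :=
    lintegral_congr_ae (hb.mono fun t => epos_neg_of_ne_bot)
  have hP_fin := hi.lintegral_lt_top.ne
  have hN_fin : ∫⁻ t, ENNReal.ofReal (-(f t).toReal) ∂μ ≠ ⊤ := hi.neg.lintegral_lt_top.ne
  rw [eintegral, hP, if_neg hP_fin, hN, integral_eq_lintegral_pos_part_sub_lintegral_neg_part hi,
    EReal.coe_sub, ← EReal.coe_ennreal_toReal hP_fin, ← EReal.coe_ennreal_toReal hN_fin]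

lemma eintegral_eq_integral_toReal_of_ne_top (hm : Measurable f) (hf : ∀ t, f t ≠ ⊥)
    (ht : eintegral μ f ≠ ⊤) (hb : eintegral μ f ≠ ⊥) :
    (∀ᵐ t ∂μ, f t ≠ ⊤) ∧ Integrable (fun t => (f t).toReal) μ ∧
      eintegral μ f = ((∫ t, (f t).toReal ∂μ : ℝ) : EReal) := by
  have hfin := ae_ne_top_of_eintegral_ne_top hm ht
  have hint := integrable_toReal_of_eintegral_ne_top hm ht hb
  exact ⟨hfin, hint, eintegral_eq_integral_toReal (.of_forall hf) hfin hint⟩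

lemma eintegral_ne_top_of_ae_le {u : T → ℝ} (hu : Integrable u μ) (h : ∀ᵐ t ∂μ, f t ≤ u t) :
    eintegral μ f ≠ ⊤ := by
  refine eintegral_ne_top_of_lintegral_epos_ne_top (ne_top_of_le_ne_top hu.lintegral_lt_top.ne ?_)
  refine lintegral_mono_ae (h.mono fun t ht => ?_)
  simpa [epos_of_ne_top (EReal.coe_ne_top (u t))] using epos_mono ht

end eintegral

lemma convex_Feas {T : Type*} [MeasurableSpace T] (μ : Measure T) {m : ℕ} (ψ : Fin m → T → ℝ)
    (b : Fin m → ℝ) : Convex ℝ (Feas μ ψ b) := by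
  intro x ⟨hxm, hxi, hxb⟩ y ⟨hym, hyi, hyb⟩ c d _ _ hcd
  have hmul : ∀ k, (fun t => (c • x + d • y) t * ψ k t) =
      fun t => c * (x t * ψ k t) + d * (y t * ψ k t) := fun k => by
    ext t
    simp only [Pi.add_apply, Pi.smul_apply, smul_eq_mul]
    ring
  refine ⟨(hxm.const_smul c).add (hym.const_smul d), fun k => ?_, fun k => ?_⟩
  · rw [hmul]
    exact ((hxi k).const_mul c).add ((hyi k).const_mul d)
  · rw [hmul, integral_add ((hxi k).const_mul c) ((hyi k).const_mul d), integral_const_mul,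
      integral_const_mul, hxb k, hyb k, ← add_mul, hcd, one_mul]

lemma apply_add_mul_sub_le_of_convex {φ : ℝ → EReal}
    (hconv : ∀ u v a b' : ℝ, 0 ≤ a → 0 ≤ b' → a + b' = 1 →
      φ (a * u + b' * v) ≤ (a : EReal) * φ u + (b' : EReal) * φ v)
    {u v s : ℝ} (hs₀ : 0 ≤ s) (hs₁ : s ≤ 1) (hu : φ u ≠ ⊤) (hu' : φ u ≠ ⊥) (hv : φ v ≠ ⊤)
    (hv' : φ v ≠ ⊥) :
    φ (u + s * (v - u)) ≤ (((1 - s) * (φ u).toReal + s * (φ v).toReal : ℝ) : EReal) := by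
  have h := hconv u v (1 - s) s (by linarith) hs₀ (by ring)
  rw [← EReal.coe_toReal hu hu', ← EReal.coe_toReal hv hv'] at h
  rw [show u + s * (v - u) = (1 - s) * u + s * v by ring]
  exact_mod_cast h

lemma lt_of_mem_lowerBounds_of_mem_interior {α : Type*} [TopologicalSpace α] [LinearOrder α]
    [OrderTopology α] [DenselyOrdered α] [NoMinOrder α] {s : Set α} {a x : α}
    (ha : a ∈ lowerBounds s) (hx : x ∈ interior s) : a < x := by
  obtain ⟨y, hyx, hy⟩ :=
    Filter.Eventually.exists_lt (p := (· ∈ s)) (mem_interior_iff_mem_nhds.1 hx)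
  exact (ha hy).trans_lt hyx

section Fatou

variable {T : Type*} [MeasurableSpace T] {μ : Measure T}

lemma measure_eq_zero_of_tendsto_atTop_of_integral_le {h : ℕ → T → ℝ} {C : ℝ} {S : Set T}
    (hS : MeasurableSet S) (hi : ∀ n, Integrable (h n) μ) (h₀ : ∀ n, 0 ≤ᵐ[μ] h n)
    (hC : ∀ n, ∫ t, h n t ∂μ ≤ C)
    (htop : ∀ᵐ t ∂μ, t ∈ S → Tendsto (fun n => h n t) atTop atTop) : μ S = 0 := by
  have hlim : ∀ᵐ t ∂μ.restrict S, liminf (fun n => ENNReal.ofReal (h n t)) atTop = ⊤ := by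
    filter_upwards [(ae_restrict_iff' hS).2 htop] with t ht
    exact (ENNReal.tendsto_ofReal_atTop.comp ht).liminf_eq
  have hle : ⊤ * μ S ≤ ENNReal.ofReal C := calc
    ⊤ * μ S = ∫⁻ t in S, liminf (fun n => ENNReal.ofReal (h n t)) atTop ∂μ := by
      rw [lintegral_congr_ae hlim, setLIntegral_const]
    _ ≤ ∫⁻ t, liminf (fun n => ENNReal.ofReal (h n t)) atTop ∂μ := setLIntegral_le_lintegral _ _
    _ ≤ liminf (fun n => ∫⁻ t, ENNReal.ofReal (h n t) ∂μ) atTop :=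
      lintegral_liminf_le' fun n => (hi n).aemeasurable.ennreal_ofReal
    _ ≤ ENNReal.ofReal C := by
      refine liminf_le_of_frequently_le' (Frequently.of_forall fun n => ?_)
      rw [← ofReal_integral_eq_lintegral_ofReal (hi n) (h₀ n)]
      exact ENNReal.ofReal_le_ofReal (hC n)
  by_contra hS₀
  rw [ENNReal.top_mul hS₀, top_le_iff] at hle
  exact ENNReal.ofReal_ne_top hle

lemma measure_eq_zero_of_slope_seq_tendsto_atBot {Fb Ft : T → ℝ} {F : ℕ → T → ℝ} {lam : ℕ → ℝ}
    {S : Set T} (hlam : ∀ n, 0 < lam n) (hFb : Integrable Fb μ) (hFt : Integrable Ft μ)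
    (hF : ∀ n, Integrable (F n) μ) (hmin : ∀ n, ∫ t, Fb t ∂μ ≤ ∫ t, F n t ∂μ)
    (hconv : ∀ n, ∀ᵐ t ∂μ, F n t ≤ (1 - lam n) * Fb t + lam n * Ft t) (hS : MeasurableSet S)
    (hdiv : ∀ᵐ t ∂μ, t ∈ S → Tendsto (fun n => (F n t - Fb t) / lam n) atTop atBot) :
    μ S = 0 := by
  have hg : Integrable (fun t => Ft t - Fb t) μ := hFt.sub hFb
  have hq : ∀ n, Integrable (fun t => (F n t - Fb t) / lam n) μ :=
    fun n => ((hF n).sub hFb).div_const _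
  refine measure_eq_zero_of_tendsto_atTop_of_integral_le
    (h := fun n t => Ft t - Fb t - (F n t - Fb t) / lam n) (C := ∫ t, Ft t - Fb t ∂μ) hS
    (fun n => hg.sub (hq n)) (fun n => ?_) (fun n => ?_) ?_
  · filter_upwards [hconv n] with t ht
    have : (F n t - Fb t) / lam n ≤ Ft t - Fb t := by
      rw [div_le_iff₀ (hlam n)]
      linarith
    simpa using this
  · rw [integral_sub hg (hq n), integral_div, integral_sub (hF n) hFb]
    have := div_nonneg (sub_nonneg.2 (hmin n)) (hlam n).le
    linarith
  · filter_upwards [hdiv] with t ht htS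
    simpa only [sub_eq_add_neg] using
      tendsto_atTop_add_const_left _ _ (tendsto_neg_atTop_iff.2 (ht htS))

lemma measure_eq_zero_of_slope_tendsto_atBot {Fb Ft : T → ℝ} {F : ℝ → T → ℝ} {S : Set T}
    (hFb : Integrable Fb μ) (hFt : Integrable Ft μ) (hF : ∀ s ∈ Ioc (0 : ℝ) 1, Integrable (F s) μ)
    (hmin : ∀ s ∈ Ioc (0 : ℝ) 1, ∫ t, Fb t ∂μ ≤ ∫ t, F s t ∂μ)
    (hconv : ∀ s ∈ Ioc (0 : ℝ) 1, ∀ᵐ t ∂μ, F s t ≤ (1 - s) * Fb t + s * Ft t)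
    (hS : MeasurableSet S)
    (hdiv : ∀ᵐ t ∂μ, t ∈ S → Tendsto (fun s => (F s t - Fb t) / s) (𝓝[>] 0) atBot) :
    μ S = 0 := by
  set lam : ℕ → ℝ := fun n => 1 / (n + 1)
  have hlam : ∀ n, lam n ∈ Ioc (0 : ℝ) 1 := fun n =>
    ⟨by positivity, (div_le_one (by positivity)).2 (by simp)⟩
  have hlam0 : Tendsto lam atTop (𝓝[>] 0) := tendsto_nhdsWithin_iff.2
    ⟨tendsto_one_div_add_atTop_nhds_zero_nat, .of_forall fun n => (hlam n).1⟩
  exact measure_eq_zero_of_slope_seq_tendsto_atBot (fun n => (hlam n).1) hFb hFt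
    (fun n => hF _ (hlam n)) (fun n => hmin _ (hlam n)) (fun n => hconv _ (hlam n)) hS
    (hdiv.mono fun t ht htS => (ht htS).comp hlam0)

end Fatou

theorem stmt_16_general {T : Type*} [MeasurableSpace T] (μ : Measure T) (φ : ℝ → EReal)
(hbot : ∀ u, φ u ≠ ⊥) (hlsc : LowerSemicontinuous φ)
    (hconv : ∀ u v a b' : ℝ, 0 ≤ a → 0 ≤ b' → a + b' = 1 →
      φ (a * u + b' * v) ≤ (a : EReal) * φ u + (b' : EReal) * φ v)
(dphi : ℝ → EReal)
    (hdphi : ∀ u v : ℝ, φ u ≠ ⊤ → φ v ≠ ⊤ →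
      Tendsto (fun s : ℝ => ((((φ (u + s * (v - u))).toReal - (φ u).toReal) / s : ℝ) : EReal))
        (𝓝[>] (0 : ℝ)) (𝓝 (dphi u * ((v : EReal) - (u : EReal)))))
    (m : ℕ) (ψ : Fin m → T → ℝ) (b : Fin m → ℝ)
    (X : Subspace ℝ (T → ℝ)) (hX : ∀ x ∈ X, Measurable x)
    (a : ℝ) (ha : IsGLB {u : ℝ | φ u ≠ ⊤} a) (hda : dphi a = ⊥)
    (xt : T → ℝ) (hxtX : xt ∈ X) (hxtF : xt ∈ Feas μ ψ b) (hxtdom : Phi μ φ xt < ⊤)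
    (hxtint : ∀ᵐ t ∂μ, xt t ∈ interior {u : ℝ | φ u ≠ ⊤})
    (xb : T → ℝ) (hxbX : xb ∈ X) (hxbF : xb ∈ Feas μ ψ b)
    (hfin : ∃ r : ℝ, Phi μ φ xb = (r : EReal))
    (hopt : ∀ x ∈ X, x ∈ Feas μ ψ b → Phi μ φ xb ≤ Phi μ φ x) :
    μ {t | xb t = a} = 0 := by
  obtain ⟨r, hr⟩ := hfin
  have hcompetitor : ∀ y ∈ X, y ∈ Feas μ ψ b → Phi μ φ y ≠ ⊤ → (∀ᵐ t ∂μ, φ (y t) ≠ ⊤) ∧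
      Integrable (fun t => (φ (y t)).toReal) μ ∧ Phi μ φ y = ∫ t, (φ (y t)).toReal ∂μ :=
    fun y hyX hyF hy => eintegral_eq_integral_toReal_of_ne_top (hlsc.measurable.comp (hX y hyX))
      (fun t => hbot _) hy (ne_bot_of_le_ne_bot (hr ▸ EReal.coe_ne_bot r) (hopt y hyX hyF))
  obtain ⟨hb_fin, hb_int, hb_eq⟩ := hcompetitor xb hxbX hxbF (hr ▸ EReal.coe_ne_top r)
  obtain ⟨ht_fin, ht_int, -⟩ := hcompetitor xt hxtX hxtF hxtdom.ne
  set x : ℝ → T → ℝ := fun s => xb + s • (xt - xb)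
  have hx : ∀ s ∈ Ioc (0 : ℝ) 1, x s ∈ X ∧ x s ∈ Feas μ ψ b := fun s hs =>
    (X.convex.inter (convex_Feas μ ψ b)).add_smul_sub_mem ⟨hxbX, hxbF⟩ ⟨hxtX, hxtF⟩
      (Ioc_subset_Icc_self hs)
  have hbound : ∀ s ∈ Ioc (0 : ℝ) 1, ∀ᵐ t ∂μ, φ (x s t) ≤
      (((1 - s) * (φ (xb t)).toReal + s * (φ (xt t)).toReal : ℝ) : EReal) := fun s hs => by
    filter_upwards [hb_fin, ht_fin] with t hbt htt
    exact apply_add_mul_sub_le_of_convex hconv hs.1.le hs.2 hbt (hbot _) htt (hbot _)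
  have hxs := fun s hs => hcompetitor (x s) (hx s hs).1 (hx s hs).2
    (eintegral_ne_top_of_ae_le ((hb_int.const_mul _).add (ht_int.const_mul _)) (hbound s hs))
  refine measure_eq_zero_of_slope_tendsto_atBot hb_int ht_int (fun s hs => (hxs s hs).2.1)
    (fun s hs => ?_) (fun s hs => ?_) (hX xb hxbX (measurableSet_singleton a)) ?_
  · exact_mod_cast hb_eq ▸ (hxs s hs).2.2 ▸ hopt _ (hx s hs).1 (hx s hs).2
  · filter_upwards [hbound s hs] with t ht
    rw [← EReal.toReal_coe ((1 - s) * _ + _)]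
    exact EReal.toReal_le_toReal ht (hbot _) (EReal.coe_ne_top _)
  · filter_upwards [hb_fin, ht_fin, hxtint] with t hbt htt hti (hS : xb t = a)
    have hd := hdphi a (xt t) (hS ▸ hbt) htt
    have hpos : (0 : EReal) < (xt t : EReal) - (a : EReal) := by
      exact_mod_cast sub_pos.2 (lt_of_mem_lowerBounds_of_mem_interior ha.1 hti)
    rw [hda, EReal.bot_mul_of_pos hpos, EReal.tendsto_coe_nhds_bot_iff] at hd
    simpa only [x, Pi.add_apply, Pi.smul_apply, Pi.sub_apply, smul_eq_mul, hS] using hd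

/-- Boundary avoidance: if `a = inf(dom φ) ∈ ℝ` with `φ'(a) = -∞`, and (P) has a feasible point
`x̃ ∈ dom Φ` with values in `int(dom φ)` a.e., then any optimal solution `x̄` with
`Φ(x̄) ∈ ℝ` satisfies `x̄(t) ≠ a` a.e. -/
theorem stmt_16 {T : Type*} [MeasurableSpace T] (μ : Measure T) (φ : ℝ → EReal)
(hbot : ∀ u, φ u ≠ ⊥) (hproper : ∃ u, φ u ≠ ⊤) (hlsc : LowerSemicontinuous φ)
    (hconv : ∀ u v a b' : ℝ, 0 ≤ a → 0 ≤ b' → a + b' = 1 →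
      φ (a * u + b' * v) ≤ (a : EReal) * φ u + (b' : EReal) * φ v)
    (hstrict : ∀ u v : ℝ, φ u ≠ ⊤ → φ v ≠ ⊤ → u ≠ v → ∀ a b' : ℝ, 0 < a → 0 < b' → a + b' = 1 →
      φ (a * u + b' * v) < (a : EReal) * φ u + (b' : EReal) * φ v)
    (hint : (interior {u : ℝ | φ u ≠ ⊤}).Nonempty)
(dphi : ℝ → EReal)
    (hdphi : ∀ u v : ℝ, φ u ≠ ⊤ → φ v ≠ ⊤ →
      Tendsto (fun s : ℝ => ((((φ (u + s * (v - u))).toReal - (φ u).toReal) / s : ℝ) : EReal))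
        (𝓝[>] (0 : ℝ)) (𝓝 (dphi u * ((v : EReal) - (u : EReal)))))
    (m : ℕ) (ψ : Fin m → T → ℝ) (hψ : ∀ k, Measurable (ψ k)) (b : Fin m → ℝ)
    (X : Subspace ℝ (T → ℝ)) (hX : ∀ x ∈ X, Measurable x)
    (a : ℝ) (ha : IsGLB {u : ℝ | φ u ≠ ⊤} a) (hda : dphi a = ⊥)
    (xt : T → ℝ) (hxtX : xt ∈ X) (hxtF : xt ∈ Feas μ ψ b) (hxtdom : Phi μ φ xt < ⊤)
    (hxtint : ∀ᵐ t ∂μ, xt t ∈ interior {u : ℝ | φ u ≠ ⊤})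
    (xb : T → ℝ) (hxbX : xb ∈ X) (hxbF : xb ∈ Feas μ ψ b)
    (hfin : ∃ r : ℝ, Phi μ φ xb = (r : EReal))
    (hopt : ∀ x ∈ X, x ∈ Feas μ ψ b → Phi μ φ xb ≤ Phi μ φ x) :
    μ {t | xb t = a} = 0 :=
  stmt_16_general μ φ hbot hlsc hconv dphi hdphi m ψ b X hX a ha hda xt hxtX hxtF hxtdom hxtint xb
    hxbX hxbF hfin hopt
end
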